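/- Let (W_1, W_2) on K be a minimal regular unitary dilation of a commuting pair of contractions (T_1, T_2) on H ⊆ K, and let S_1,…,S_d be isometries on H such that (T_1, S_1,…,S_d) and (T_2, S_1,…,S_d) are doubly commuting tuples. Then for each i and each finite collection h_1,…,h_r ∈ H, k^1,…,k^r ∈ ℤ², one has ‖∑_l W^{k^l} S_i h_l‖ = ‖∑_l W^{k^l} h_l‖, and consequently there is a well-defined isometry U_i on K with U_i(W^k h) = W^k S_i h for all h ∈ H and k ∈ ℤ². -/

import Mathlib

/-!
Regularity of the dilation says `⟪ι g, W^k ι h⟫ = ⟪g, T(k) h⟫` with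
`T(k) = T₁^{*k₁₋} T₂^{*k₂₋} T₁^{k₁₊} T₂^{k₂₊}`. An isometry `S` commuting with `T₁, T₂, T₁^*, T₂^*`
commutes with every `T(k)`, so `⟪S g, T(k) S h⟫ = ⟪g, T(k) h⟫`, and since `W` is a commuting pair of
unitaries, `⟪W^k x, W^l y⟫ = ⟪x, W^{l-k} y⟫`. Hence the families `W^k ι h` and `W^k ι (S h)` have the
same Gram matrix. Equal Gram matrices give equal norms of all finite linear combinations, hence an
isometry from the span of the first family onto that of the second, which extends to `K` because
the first span is dense by minimality.
-/

open ContinuousLinearMap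

/-- For commuting unitaries `W₁, W₂`, the operator `W^k = W₁^{k₁} W₂^{k₂}` for
`k ∈ ℤ²`, written via positive and negative parts. -/
noncomputable def Wpow {K : Type*} [NormedAddCommGroup K] [InnerProductSpace ℂ K]
    [CompleteSpace K] (W₁ W₂ : K →L[ℂ] K) (a b : ℤ) : K →L[ℂ] K :=
  W₁ ^ a.toNat * (adjoint W₁) ^ (-a).toNat *
    (W₂ ^ b.toNat * (adjoint W₂) ^ (-b).toNat)

open Finsupp Submodule Set

section GramExtension

variable {𝕜 E F ι : Type*} [RCLike 𝕜] [NormedAddCommGroup E] [InnerProductSpace 𝕜 E]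
  [NormedAddCommGroup F] [InnerProductSpace 𝕜 F] {v : ι → E} {w : ι → F}

theorem norm_sum_eq_of_inner_eq (h : ∀ i j, inner 𝕜 (v i) (v j) = inner 𝕜 (w i) (w j))
    (s : Finset ι) : ‖∑ i ∈ s, v i‖ = ‖∑ i ∈ s, w i‖ := by
  have : inner 𝕜 (∑ i ∈ s, v i) (∑ i ∈ s, v i) = inner 𝕜 (∑ i ∈ s, w i) (∑ i ∈ s, w i) := by
    simp only [sum_inner, inner_sum, h]
  rw [@norm_eq_sqrt_re_inner 𝕜, @norm_eq_sqrt_re_inner 𝕜, this]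

theorem norm_linearCombination_eq_of_inner_eq
    (h : ∀ i j, inner 𝕜 (v i) (v j) = inner 𝕜 (w i) (w j)) (c : ι →₀ 𝕜) :
    ‖linearCombination 𝕜 v c‖ = ‖linearCombination 𝕜 w c‖ := by
  simp only [linearCombination_apply, Finsupp.sum]
  exact norm_sum_eq_of_inner_eq (𝕜 := 𝕜) (v := fun i => c i • v i) (w := fun i => c i • w i)
    (fun i j => by simp only [inner_smul_left, inner_smul_right, h]) _

theorem exists_linearIsometry_of_inner_eq [CompleteSpace F]
    (hv : (span 𝕜 (range v)).topologicalClosure = ⊤)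
    (h : ∀ i j, inner 𝕜 (v i) (v j) = inner 𝕜 (w i) (w j)) :
    ∃ U : E →ₗᵢ[𝕜] F, ∀ i, U (v i) = w i := by
  have hdense : DenseRange (linearCombination 𝕜 v) := by
    rw [DenseRange, ← LinearMap.coe_range, range_linearCombination]
    exact dense_iff_topologicalClosure_eq_top.mpr hv
  have hbound : ∃ C, ∀ c, ‖linearCombination 𝕜 w c‖ ≤ C * ‖linearCombination 𝕜 v c‖ :=
    ⟨1, fun c => by rw [one_mul, norm_linearCombination_eq_of_inner_eq h]⟩
  set U := (linearCombination 𝕜 w).extendOfNorm (linearCombination 𝕜 v)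
  have hU : ∀ c, U (linearCombination 𝕜 v c) = linearCombination 𝕜 w c :=
    LinearMap.extendOfNorm_eq hdense hbound
  have hnorm : ∀ x, ‖U x‖ = ‖x‖ := by
    refine hdense.induction ?_ (isClosed_eq (by fun_prop) continuous_norm)
    rintro _ ⟨c, rfl⟩
    rw [hU, norm_linearCombination_eq_of_inner_eq h]
  exact ⟨⟨U.toLinearMap, hnorm⟩, fun i => by simpa using hU (single i 1)⟩

end GramExtension

theorem Unitary.coe_zpow_eq_pow_mul_star_pow {R : Type*} [Monoid R] [StarMul R]
    (U : unitary R) (z : ℤ) :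
    ((U ^ z : unitary R) : R) = (U : R) ^ z.toNat * star (U : R) ^ (-z).toNat := by
  cases z with
  | ofNat n => simp
  | negSucc n =>
    simp [zpow_negSucc, ← Unitary.star_eq_inv, Int.neg_negSucc]

theorem Commute.inv_pow_mul_inv_pow_mul_pow_mul_pow {G : Type*} [Group G] {x y : G}
    (h : Commute x y) (a b : ℤ) :
    x⁻¹ ^ (-a).toNat * y⁻¹ ^ (-b).toNat * (x ^ a.toNat * y ^ b.toNat) = x ^ a * y ^ b := by
  simp only [← zpow_natCast, inv_zpow']
  rw [mul_assoc, ← mul_assoc (y ^ _), (h.symm.zpow_zpow _ _).eq, mul_assoc, ← mul_assoc,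
    ← zpow_add, ← zpow_add, neg_add_eq_sub, neg_add_eq_sub, Int.toNat_sub_toNat_neg,
    Int.toNat_sub_toNat_neg]

section Dilation

variable {K : Type*} [NormedAddCommGroup K] [InnerProductSpace ℂ K] [CompleteSpace K]

theorem Wpow_coe_eq_coe_zpow_mul_zpow (U₁ U₂ : unitary (K →L[ℂ] K)) (a b : ℤ) :
    Wpow (U₁ : K →L[ℂ] K) U₂ a b = ((U₁ ^ a * U₂ ^ b : unitary (K →L[ℂ] K)) : K →L[ℂ] K) := by
  rw [Submonoid.coe_mul, Unitary.coe_zpow_eq_pow_mul_star_pow,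
    Unitary.coe_zpow_eq_pow_mul_star_pow, star_eq_adjoint, star_eq_adjoint, Wpow]

variable {W₁ W₂ : K →L[ℂ] K}

theorem adjoint_pow_mul_adjoint_pow_mul_pow_mul_pow_eq_Wpow (hW₁ : W₁ ∈ unitary (K →L[ℂ] K))
    (hW₂ : W₂ ∈ unitary (K →L[ℂ] K)) (hW : Commute W₁ W₂) (a b : ℤ) :
    adjoint W₁ ^ (-a).toNat * adjoint W₂ ^ (-b).toNat * (W₁ ^ a.toNat * W₂ ^ b.toNat) =
      Wpow W₁ W₂ a b := by
  lift W₁ to unitary (K →L[ℂ] K) using hW₁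
  lift W₂ to unitary (K →L[ℂ] K) using hW₂
  have hU : Commute W₁ W₂ := Subtype.ext hW.eq
  rw [Wpow_coe_eq_coe_zpow_mul_zpow, ← hU.inv_pow_mul_inv_pow_mul_pow_mul_pow]
  simp [← Unitary.star_eq_inv, Unitary.coe_star, star_eq_adjoint]

theorem inner_Wpow_apply_Wpow_apply (hW₁ : W₁ ∈ unitary (K →L[ℂ] K))
    (hW₂ : W₂ ∈ unitary (K →L[ℂ] K)) (hW : Commute W₁ W₂) (a b c d : ℤ) (x y : K) :
    inner ℂ (Wpow W₁ W₂ a b x) (Wpow W₁ W₂ c d y) =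
      inner ℂ x (Wpow W₁ W₂ (c - a) (d - b) y) := by
  lift W₁ to unitary (K →L[ℂ] K) using hW₁
  lift W₂ to unitary (K →L[ℂ] K) using hW₂
  have hU : Commute W₁ W₂ := Subtype.ext hW.eq
  have hprod : (W₁ ^ a * W₂ ^ b)⁻¹ * (W₁ ^ c * W₂ ^ d) = W₁ ^ (c - a) * W₂ ^ (d - b) := by
    rw [(hU.zpow_zpow a b).mul_inv, ← zpow_neg, ← zpow_neg,
      (hU.symm.zpow_zpow (-b) c).mul_mul_mul_comm, ← zpow_add, ← zpow_add, neg_add_eq_sub,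
      neg_add_eq_sub]
  rw [← adjoint_inner_right, Wpow_coe_eq_coe_zpow_mul_zpow, Wpow_coe_eq_coe_zpow_mul_zpow,
    Wpow_coe_eq_coe_zpow_mul_zpow, ← hprod, ← star_eq_adjoint, ← Unitary.coe_star,
    Unitary.star_eq_inv]
  rfl

variable {H : Type*} [NormedAddCommGroup H] [InnerProductSpace ℂ H] [CompleteSpace H]
  {ι : H →L[ℂ] K} {T₁ T₂ : H →L[ℂ] H}

theorem inner_apply_Wpow_apply_of_regular (hW₁ : W₁ ∈ unitary (K →L[ℂ] K))
    (hW₂ : W₂ ∈ unitary (K →L[ℂ] K)) (hW : Commute W₁ W₂)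
    (hreg : ∀ a b : ℤ,
      adjoint ι ∘L ((adjoint W₁) ^ (-a).toNat * (adjoint W₂) ^ (-b).toNat *
          (W₁ ^ a.toNat * W₂ ^ b.toNat)) ∘L ι
        = (adjoint T₁) ^ (-a).toNat * (adjoint T₂) ^ (-b).toNat *
            (T₁ ^ a.toNat * T₂ ^ b.toNat))
    (a b : ℤ) (g h : H) :
    inner ℂ (ι g) (Wpow W₁ W₂ a b (ι h)) =
      inner ℂ g ((adjoint T₁ ^ (-a).toNat * adjoint T₂ ^ (-b).toNat *
        (T₁ ^ a.toNat * T₂ ^ b.toNat)) h) := by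
  rw [← hreg, adjoint_pow_mul_adjoint_pow_mul_pow_mul_pow_eq_Wpow hW₁ hW₂ hW, comp_apply,
    comp_apply, adjoint_inner_right]

theorem inner_Wpow_apply_Wpow_apply_map_eq (hW₁ : W₁ ∈ unitary (K →L[ℂ] K))
    (hW₂ : W₂ ∈ unitary (K →L[ℂ] K)) (hW : Commute W₁ W₂)
    (hreg : ∀ a b : ℤ,
      adjoint ι ∘L ((adjoint W₁) ^ (-a).toNat * (adjoint W₂) ^ (-b).toNat *
          (W₁ ^ a.toNat * W₂ ^ b.toNat)) ∘L ι
        = (adjoint T₁) ^ (-a).toNat * (adjoint T₂) ^ (-b).toNat *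
            (T₁ ^ a.toNat * T₂ ^ b.toNat))
    {S : H →L[ℂ] H} (hS : adjoint S ∘L S = 1)
    (hST₁ : T₁ * S = S * T₁ ∧ T₁ * adjoint S = adjoint S * T₁)
    (hST₂ : T₂ * S = S * T₂ ∧ T₂ * adjoint S = adjoint S * T₂) (a b c d : ℤ) (g h : H) :
    inner ℂ (Wpow W₁ W₂ a b (ι (S g))) (Wpow W₁ W₂ c d (ι (S h))) =
      inner ℂ (Wpow W₁ W₂ a b (ι g)) (Wpow W₁ W₂ c d (ι h)) := by
  have adjoint_commute : ∀ {T : H →L[ℂ] H}, T * adjoint S = adjoint S * T → Commute (adjoint T) S :=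
    fun hT => by simpa only [star_eq_adjoint, adjoint_adjoint] using Commute.star_star hT
  have hcomm : Commute S (adjoint T₁ ^ (-(c - a)).toNat * adjoint T₂ ^ (-(d - b)).toNat *
      (T₁ ^ (c - a).toNat * T₂ ^ (d - b).toNat)) :=
    (((adjoint_commute hST₁.2).pow_left _).mul_left ((adjoint_commute hST₂.2).pow_left _)).mul_left
      ((Commute.pow_left hST₁.1 _).mul_left (Commute.pow_left hST₂.1 _)) |>.symm
  rw [inner_Wpow_apply_Wpow_apply hW₁ hW₂ hW, inner_Wpow_apply_Wpow_apply hW₁ hW₂ hW,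
    inner_apply_Wpow_apply_of_regular hW₁ hW₂ hW hreg,
    inner_apply_Wpow_apply_of_regular hW₁ hW₂ hW hreg, ← mul_apply_eq_comp, ← hcomm.eq,
    mul_apply_eq_comp, ← adjoint_inner_right, ← comp_apply, hS, one_apply_eq_self]

end Dilation

theorem isometries_on_minimal_dilation_space_general {H K : Type*}
    [NormedAddCommGroup H] [InnerProductSpace ℂ H] [CompleteSpace H]
    [NormedAddCommGroup K] [InnerProductSpace ℂ K] [CompleteSpace K]
    (ι : H →L[ℂ] K)
    (T₁ T₂ : H →L[ℂ] H)
    (W₁ W₂ : K →L[ℂ] K)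
    (hW₁ : adjoint W₁ ∘L W₁ = 1 ∧ W₁ ∘L adjoint W₁ = 1)
    (hW₂ : adjoint W₂ ∘L W₂ = 1 ∧ W₂ ∘L adjoint W₂ = 1)
    (hW : Commute W₁ W₂)
    (hreg : ∀ a b : ℤ,
      adjoint ι ∘L ((adjoint W₁) ^ (-a).toNat * (adjoint W₂) ^ (-b).toNat *
          (W₁ ^ a.toNat * W₂ ^ b.toNat)) ∘L ι
        = (adjoint T₁) ^ (-a).toNat * (adjoint T₂) ^ (-b).toNat *
            (T₁ ^ a.toNat * T₂ ^ b.toNat))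
    (hmin : (Submodule.span ℂ
        {x : K | ∃ (a b : ℤ) (h : H), x = Wpow W₁ W₂ a b (ι h)}).topologicalClosure = ⊤)
    {d : ℕ} (S : Fin d → (H →L[ℂ] H))
    (hS : ∀ i, adjoint (S i) ∘L S i = 1)
    (hST₁ : ∀ i, T₁ * S i = S i * T₁ ∧ T₁ * adjoint (S i) = adjoint (S i) * T₁)
    (hST₂ : ∀ i, T₂ * S i = S i * T₂ ∧ T₂ * adjoint (S i) = adjoint (S i) * T₂) :
    (∀ (i : Fin d) (r : ℕ) (h : Fin r → H) (κ : Fin r → ℤ × ℤ),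
      ‖∑ l, Wpow W₁ W₂ (κ l).1 (κ l).2 (ι (S i (h l)))‖
        = ‖∑ l, Wpow W₁ W₂ (κ l).1 (κ l).2 (ι (h l))‖) ∧
    ∃ U : Fin d → (K →L[ℂ] K), ∀ i,
      (adjoint (U i) ∘L U i = 1) ∧
      ∀ (a b : ℤ) (h : H), U i (Wpow W₁ W₂ a b (ι h)) = Wpow W₁ W₂ a b (ι (S i h)) := by
  have hgram (i : Fin d) := inner_Wpow_apply_Wpow_apply_map_eq (Unitary.mem_iff.mpr hW₁)
    (Unitary.mem_iff.mpr hW₂) hW hreg (hS i) (hST₁ i) (hST₂ i)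
  have hspan : span ℂ (range fun k : ℤ × ℤ × H => Wpow W₁ W₂ k.1 k.2.1 (ι k.2.2)) =
      span ℂ {x : K | ∃ (a b : ℤ) (h : H), x = Wpow W₁ W₂ a b (ι h)} := by
    congr 1
    ext x
    simp [eq_comm]
  refine ⟨fun i r h κ => norm_sum_eq_of_inner_eq (fun l m => hgram i _ _ _ _ _ _) _, ?_⟩
  choose U hU using fun i => exists_linearIsometry_of_inner_eq (hspan ▸ hmin)
    (w := fun k : ℤ × ℤ × H => Wpow W₁ W₂ k.1 k.2.1 (ι (S i k.2.2)))
    (fun k k' => (hgram i _ _ _ _ _ _).symm)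
  exact ⟨fun i => (U i).toContinuousLinearMap, fun i =>
    ⟨(U i).toContinuousLinearMap.norm_map_iff_adjoint_comp_self.mp (U i).norm_map,
      fun a b h => hU i (a, b, h)⟩⟩

/-- Let `(W₁, W₂)` on `K` be a minimal regular unitary dilation of the commuting pair of
contractions `(T₁, T₂)` on `H` (embedded via the isometry `ι`), and let `S_1,…,S_d` be
isometries on `H` such that `(T₁, S_1,…,S_d)` and `(T₂, S_1,…,S_d)` are doubly commuting.
Then `‖∑_l W^{k^l} S_i h_l‖ = ‖∑_l W^{k^l} h_l‖` for all finite collections, and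
consequently there are well-defined isometries `U_i` on `K` with
`U_i (W^k h) = W^k (S_i h)` for all `h ∈ H`, `k ∈ ℤ²`. -/
theorem isometries_on_minimal_dilation_space {H K : Type*}
    [NormedAddCommGroup H] [InnerProductSpace ℂ H] [CompleteSpace H]
    [NormedAddCommGroup K] [InnerProductSpace ℂ K] [CompleteSpace K]
    (ι : H →L[ℂ] K) (hι : adjoint ι ∘L ι = 1)
    (T₁ T₂ : H →L[ℂ] H) (hT₁ : ‖T₁‖ ≤ 1) (hT₂ : ‖T₂‖ ≤ 1) (hT : Commute T₁ T₂)
    (W₁ W₂ : K →L[ℂ] K)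
    (hW₁ : adjoint W₁ ∘L W₁ = 1 ∧ W₁ ∘L adjoint W₁ = 1)
    (hW₂ : adjoint W₂ ∘L W₂ = 1 ∧ W₂ ∘L adjoint W₂ = 1)
    (hW : Commute W₁ W₂)
    (hreg : ∀ a b : ℤ,
      adjoint ι ∘L ((adjoint W₁) ^ (-a).toNat * (adjoint W₂) ^ (-b).toNat *
          (W₁ ^ a.toNat * W₂ ^ b.toNat)) ∘L ι
        = (adjoint T₁) ^ (-a).toNat * (adjoint T₂) ^ (-b).toNat *
            (T₁ ^ a.toNat * T₂ ^ b.toNat))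
    (hmin : (Submodule.span ℂ
        {x : K | ∃ (a b : ℤ) (h : H), x = Wpow W₁ W₂ a b (ι h)}).topologicalClosure = ⊤)
    {d : ℕ} (S : Fin d → (H →L[ℂ] H))
    (hS : ∀ i, adjoint (S i) ∘L S i = 1)
    (hSS : ∀ i j, i ≠ j →
      S i * S j = S j * S i ∧ S i * adjoint (S j) = adjoint (S j) * S i)
    (hST₁ : ∀ i, T₁ * S i = S i * T₁ ∧ T₁ * adjoint (S i) = adjoint (S i) * T₁)
    (hST₂ : ∀ i, T₂ * S i = S i * T₂ ∧ T₂ * adjoint (S i) = adjoint (S i) * T₂) :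
    (∀ (i : Fin d) (r : ℕ) (h : Fin r → H) (κ : Fin r → ℤ × ℤ),
      ‖∑ l, Wpow W₁ W₂ (κ l).1 (κ l).2 (ι (S i (h l)))‖
        = ‖∑ l, Wpow W₁ W₂ (κ l).1 (κ l).2 (ι (h l))‖) ∧
    ∃ U : Fin d → (K →L[ℂ] K), ∀ i,
      (adjoint (U i) ∘L U i = 1) ∧
      ∀ (a b : ℤ) (h : H), U i (Wpow W₁ W₂ a b (ι h)) = Wpow W₁ W₂ a b (ι (S i h)) :=
  isometries_on_minimal_dilation_space_general ι T₁ T₂ W₁ W₂ hW₁ hW₂ hW hreg hmin S hS hST₁ hST₂
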